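/- Fix n ∈ ℕ and p > 0. Let A = span{e₁,…,e_n} ∪ {(x_j) ∈ ℓ^p : x₁ = ⋯ = x_n = 0} ⊆ ℓ^p. Then A is (n+1, 𝔠)-lineable but not (n, 𝔠)-lineable. -/
import Mathlib


open Cardinal

/-- Membership in the sequence space ℓ^p: `∑ |x j|^p < ∞`. -/
def MemSeqLp (p : ℝ) (x : ℕ → ℝ) : Prop := Summable fun j => |x j| ^ p

/-- `A ⊆ V` is `(α, β)`-lineable (over ℝ): `A` is `α`-lineable and every `α`-dimensional
subspace contained in `A ∪ {0}` extends to a `β`-dimensional subspace contained in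
`A ∪ {0}`. -/
def IsABLineable {V : Type*} [AddCommGroup V] [Module ℝ V]
    (α β : Cardinal) (A : Set V) : Prop :=
  (∃ W : Submodule ℝ V, Module.rank ℝ W = α ∧ (W : Set V) ⊆ A ∪ {0}) ∧
  ∀ W : Submodule ℝ V, Module.rank ℝ W = α → (W : Set V) ⊆ A ∪ {0} →
    ∃ W' : Submodule ℝ V, Module.rank ℝ W' = β ∧ W ≤ W' ∧ (W' : Set V) ⊆ A ∪ {0}

/-- A subspace contained in the union of two subspaces is contained in one of them. -/
lemma aux_union {V : Type*} [AddCommGroup V] [Module ℝ V] (F Z W : Submodule ℝ V)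
    (h : (W : Set V) ⊆ (F : Set V) ∪ (Z : Set V)) : W ≤ F ∨ W ≤ Z := by
  by_contra hc
  push_neg at hc
  obtain ⟨x, hxW, hxF⟩ := SetLike.not_le_iff_exists.mp hc.1
  obtain ⟨y, hyW, hyZ⟩ := SetLike.not_le_iff_exists.mp hc.2
  have hxZ : x ∈ Z := by
    rcases h hxW with h1 | h1
    · exact absurd h1 hxF
    · exact h1
  have hyF : y ∈ F := by
    rcases h hyW with h1 | h1
    · exact h1
    · exact absurd h1 hyZ
  rcases h (Submodule.add_mem W hxW hyW) with hF | hZ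
  · exact hxF (by simpa using F.sub_mem hF hyF)
  · exact hyZ (by simpa using Z.sub_mem hZ hxZ)

lemma li_single : LinearIndependent ℝ (fun j : ℕ => (Pi.single j (1:ℝ) : ℕ → ℝ)) := by
  rw [linearIndependent_iff']
  intro s g hg i hi
  have h := congrFun hg i
  simpa [Finset.sum_apply, Pi.single_apply, hi] using h

lemma memSeqLp_zero {p : ℝ} (hp : 0 < p) : MemSeqLp p 0 := by
  have : (fun j : ℕ => |(0 : ℕ → ℝ) j| ^ p) = fun _ => (0:ℝ) := by
    funext j; simp [Real.zero_rpow hp.ne']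
  rw [MemSeqLp, this]
  exact summable_zero

lemma MemSeqLp.add' {p : ℝ} (hp : 0 < p) {x y : ℕ → ℝ} (hx : MemSeqLp p x)
    (hy : MemSeqLp p y) : MemSeqLp p (x + y) := by
  have key : ∀ j, |(x + y) j| ^ p ≤ (2:ℝ) ^ p * (|x j| ^ p + |y j| ^ p) := by
    intro j
    have h1 : |(x + y) j| ^ p ≤ (|x j| + |y j|) ^ p :=
      Real.rpow_le_rpow (abs_nonneg _) (by simpa using abs_add_le (x j) (y j)) hp.le
    have h2 : (|x j| + |y j|) ^ p ≤ (2 * max (|x j|) (|y j|)) ^ p := by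
      apply Real.rpow_le_rpow (by positivity) ?_ hp.le
      rcases le_total (|x j|) (|y j|) with h | h
      · rw [max_eq_right h]; linarith
      · rw [max_eq_left h]; linarith
    have h3 : (2 * max (|x j|) (|y j|)) ^ p = 2 ^ p * (max (|x j|) (|y j|)) ^ p :=
      Real.mul_rpow (by norm_num) (le_max_of_le_left (abs_nonneg _))
    have h4 : (max (|x j|) (|y j|)) ^ p ≤ |x j| ^ p + |y j| ^ p := by
      rcases le_total (|x j|) (|y j|) with h | h
      · rw [max_eq_right h]
        have := Real.rpow_nonneg (abs_nonneg (x j)) p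
        linarith
      · rw [max_eq_left h]
        have := Real.rpow_nonneg (abs_nonneg (y j)) p
        linarith
    have h2p : (0:ℝ) ≤ 2 ^ p := Real.rpow_nonneg (by norm_num) p
    calc |(x + y) j| ^ p ≤ (2 * max (|x j|) (|y j|)) ^ p := h1.trans h2
      _ = 2 ^ p * (max (|x j|) (|y j|)) ^ p := h3
      _ ≤ 2 ^ p * (|x j| ^ p + |y j| ^ p) := by nlinarith [h4]
  exact Summable.of_nonneg_of_le (fun j => Real.rpow_nonneg (abs_nonneg _) p) key
    ((hx.add hy).mul_left _)

lemma MemSeqLp.smul' {p : ℝ} {x : ℕ → ℝ} (hx : MemSeqLp p x) (c : ℝ) :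
    MemSeqLp p (c • x) := by
  have : (fun j => |(c • x) j| ^ p) = fun j => |c| ^ p * |x j| ^ p := by
    funext j
    rw [Pi.smul_apply, smul_eq_mul, abs_mul, Real.mul_rpow (abs_nonneg _) (abs_nonneg _)]
  rw [MemSeqLp, this]
  exact hx.mul_left _

/-- The subspace of `ℓ^p` sequences vanishing on the first `n` coordinates. -/
def Zmod (p : ℝ) (hp : 0 < p) (n : ℕ) : Submodule ℝ (ℕ → ℝ) where
  carrier := {x | MemSeqLp p x ∧ ∀ i < n, x i = 0}
  add_mem' := fun ha hb => ⟨ha.1.add' hp hb.1, fun i hi => by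
    simp [ha.2 i hi, hb.2 i hi]⟩
  zero_mem' := ⟨memSeqLp_zero hp, fun i _ => rfl⟩
  smul_mem' := fun c x hx => ⟨hx.1.smul' c, fun i hi => by
    simp [hx.2 i hi]⟩

lemma mem_Zmod {p : ℝ} {hp : 0 < p} {n : ℕ} {x : ℕ → ℝ} :
    x ∈ Zmod p hp n ↔ MemSeqLp p x ∧ ∀ i < n, x i = 0 := Iff.rfl

lemma li_geom : LinearIndependent ℝ
    (fun t : Set.Ioo (0:ℝ) 1 => fun j : ℕ => (t:ℝ) ^ j) := by
  have h0 := (linearIndependent_monoidHom (Multiplicative ℕ) ℝ).comp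
      (fun t : Set.Ioo (0:ℝ) 1 => powersHom ℝ (t:ℝ))
      (fun a b hab => Subtype.coe_injective ((powersHom ℝ).injective hab))
  have h1 := h0.map' (LinearMap.funLeft ℝ ℝ (Multiplicative.ofAdd : ℕ → Multiplicative ℕ))
      (LinearMap.ker_eq_bot.mpr
        (LinearMap.funLeft_injective_of_surjective ℝ ℝ _ Multiplicative.ofAdd.surjective))
  have heq : (fun t : Set.Ioo (0:ℝ) 1 => fun j : ℕ => (t:ℝ) ^ j) =
      (LinearMap.funLeft ℝ ℝ (Multiplicative.ofAdd : ℕ → Multiplicative ℕ)) ∘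
        ((fun f => (f : Multiplicative ℕ → ℝ)) ∘
          fun t : Set.Ioo (0:ℝ) 1 => powersHom ℝ (t:ℝ)) := by
    funext t j
    rfl
  rw [heq]
  exact h1

/-- The truncated geometric family. -/
noncomputable def xfam (n : ℕ) (t : Set.Ioo (0:ℝ) 1) : ℕ → ℝ :=
  fun j => if j < n then 0 else (t:ℝ) ^ j

lemma li_xfam (n : ℕ) : LinearIndependent ℝ (xfam n) := by
  apply LinearIndependent.of_comp (LinearMap.funLeft ℝ ℝ (fun j : ℕ => j + n))
  have hu := li_geom.units_smul
    (fun t : Set.Ioo (0:ℝ) 1 => Units.mk0 ((t:ℝ) ^ n) (pow_ne_zero n (ne_of_gt t.2.1)))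
  convert hu using 1
  funext t j
  simp only [Function.comp_apply, LinearMap.funLeft_apply, xfam, Pi.smul_apply,
    Pi.smul_apply', Units.smul_def, Units.val_mk0, smul_eq_mul]
  rw [if_neg (by omega), pow_add]
  ring

lemma xfam_mem (n : ℕ) {p : ℝ} (hp : 0 < p) (t : Set.Ioo (0:ℝ) 1) :
    xfam n t ∈ Zmod p hp n := by
  have ht0 : (0:ℝ) < t := t.2.1
  have ht1 : (t:ℝ) < 1 := t.2.2
  constructor
  · have hr0 : (0:ℝ) ≤ (t:ℝ) ^ p := Real.rpow_nonneg ht0.le p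
    have hr1 : (t:ℝ) ^ p < 1 := Real.rpow_lt_one ht0.le ht1 hp
    show Summable fun j => |xfam n t j| ^ p
    refine Summable.of_nonneg_of_le (fun j => Real.rpow_nonneg (abs_nonneg _) p)
      ?_ (summable_geometric_of_lt_one hr0 hr1)
    intro j
    by_cases hj : j < n
    · have : |xfam n t j| ^ p = 0 := by
        simp [xfam, hj, Real.zero_rpow hp.ne']
      rw [this]
      positivity
    · have h1 : |xfam n t j| = (t:ℝ) ^ j := by
        rw [xfam]
        simp only [if_neg hj]
        exact abs_of_nonneg (pow_nonneg ht0.le j)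
      rw [h1, ← Real.rpow_natCast (t:ℝ) j, ← Real.rpow_natCast ((t:ℝ) ^ p) j,
        ← Real.rpow_mul ht0.le, ← Real.rpow_mul ht0.le, mul_comm]
  · intro i hi
    simp [xfam, hi]

lemma single_mem (n k : ℕ) (hk : n ≤ k) {p : ℝ} (hp : 0 < p) :
    (Pi.single k (1:ℝ) : ℕ → ℝ) ∈ Zmod p hp n := by
  refine ⟨?_, fun i hi => Pi.single_eq_of_ne (by omega) 1⟩
  apply summable_of_ne_finset_zero (s := {k})
  intro j hj
  have h0 : (Pi.single k (1:ℝ) : ℕ → ℝ) j = 0 := Pi.single_eq_of_ne (by simpa using hj) 1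
  rw [h0, abs_zero, Real.zero_rpow hp.ne']

lemma rank_Zmod (n : ℕ) {p : ℝ} (hp : 0 < p) : Module.rank ℝ (Zmod p hp n) = 𝔠 := by
  apply le_antisymm
  · calc Module.rank ℝ (Zmod p hp n) ≤ Module.rank ℝ (ℕ → ℝ) := Submodule.rank_le _
      _ ≤ #(ℕ → ℝ) := rank_le_card ℝ (ℕ → ℝ)
      _ = 𝔠 := by
          rw [← Cardinal.power_def, Cardinal.mk_real, Cardinal.mk_nat,
            Cardinal.continuum_power_aleph0]
  · have li : LinearIndependent ℝ
        (fun t : Set.Ioo (0:ℝ) 1 => (⟨xfam n t, xfam_mem n hp t⟩ : Zmod p hp n)) := by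
      apply LinearIndependent.of_comp (Zmod p hp n).subtype
      exact li_xfam n
    have h := li.cardinal_le_rank
    rwa [Cardinal.mk_Ioo_real zero_lt_one] at h

lemma li_fin (n : ℕ) :
    LinearIndependent ℝ (fun i : Fin n => (Pi.single (i:ℕ) (1:ℝ) : ℕ → ℝ)) :=
  li_single.comp (fun i : Fin n => (i:ℕ)) Fin.val_injective

lemma li_fin' (n : ℕ) :
    LinearIndependent ℝ (fun i : Fin (n+1) => (Pi.single (n + (i:ℕ)) (1:ℝ) : ℕ → ℝ)) :=
  li_single.comp (fun i : Fin (n+1) => n + (i:ℕ)) (fun a b hab => by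
    have h : n + (a:ℕ) = n + (b:ℕ) := hab
    exact Fin.ext (by omega))

/-- Fix `n ∈ ℕ` and `p > 0`.  The set
`A = span {e₁,…,e_n} ∪ {x ∈ ℓ^p : x₁ = ⋯ = x_n = 0}` is `(n+1, 𝔠)`-lineable but not
`(n, 𝔠)`-lineable. -/
theorem stmt10 (n : ℕ) (hn : 1 ≤ n) (p : ℝ) (hp : 0 < p)
    (A : Set (ℕ → ℝ))
    (hA : A = (Submodule.span ℝ (Set.range fun i : Fin n => (Pi.single (i : ℕ) (1 : ℝ) : ℕ → ℝ)) :
        Set (ℕ → ℝ)) ∪ {x | MemSeqLp p x ∧ ∀ i < n, x i = 0}) :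
    IsABLineable ((n : Cardinal) + 1) Cardinal.continuum A ∧
    ¬ IsABLineable (n : Cardinal) Cardinal.continuum A := by
  set F : Submodule ℝ (ℕ → ℝ) :=
    Submodule.span ℝ (Set.range fun i : Fin n => (Pi.single (i : ℕ) (1:ℝ) : ℕ → ℝ)) with hFdef
  set Z : Submodule ℝ (ℕ → ℝ) := Zmod p hp n with hZdef
  have hA0 : A ∪ {0} = (F : Set (ℕ → ℝ)) ∪ (Z : Set (ℕ → ℝ)) := by
    rw [hA]
    apply Set.union_eq_self_of_subset_right
    intro x hx
    rw [Set.mem_singleton_iff] at hx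
    subst hx
    exact Set.mem_union_left _ F.zero_mem
  have hFrank : Module.rank ℝ F = (n : Cardinal) := by
    rw [rank_span (li_fin n), Cardinal.mk_range_eq _ (li_fin n).injective,
      Cardinal.mk_fin]
  constructor
  · constructor
    · refine ⟨Submodule.span ℝ (Set.range fun i : Fin (n+1) =>
        (Pi.single (n + (i:ℕ)) (1:ℝ) : ℕ → ℝ)), ?_, ?_⟩
      · rw [rank_span (li_fin' n), Cardinal.mk_range_eq _ (li_fin' n).injective,
          Cardinal.mk_fin]
        push_cast
        ring
      · have hsub : Submodule.span ℝ (Set.range fun i : Fin (n+1) =>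
            (Pi.single (n + (i:ℕ)) (1:ℝ) : ℕ → ℝ)) ≤ Z := by
          rw [Submodule.span_le]
          rintro _ ⟨i, rfl⟩
          exact single_mem n (n + i) (Nat.le_add_right n i) hp
        rw [hA0]
        exact fun x hx => Set.mem_union_right _ (hsub hx)
    · intro W hrank hWsub
      have hWsub' : (W : Set (ℕ → ℝ)) ⊆ (F : Set (ℕ → ℝ)) ∪ (Z : Set (ℕ → ℝ)) := by
        rw [← hA0]; exact hWsub
      rcases aux_union F Z W hWsub' with hWF | hWZ
      · exfalso
        have h1 : Module.rank ℝ W ≤ Module.rank ℝ F := Submodule.rank_mono hWF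
        rw [hrank, hFrank] at h1
        norm_cast at h1
        omega
      · exact ⟨Z, rank_Zmod n hp, hWZ, by
          rw [hA0]; exact fun x hx => Set.mem_union_right _ hx⟩
  · rintro ⟨-, hext⟩
    obtain ⟨W', hW'rank, hFW', hW'sub⟩ := hext F hFrank
      (by rw [hA0]; exact Set.subset_union_left)
    have hW'sub' : (W' : Set (ℕ → ℝ)) ⊆ (F : Set (ℕ → ℝ)) ∪ (Z : Set (ℕ → ℝ)) := by
      rw [← hA0]; exact hW'sub
    rcases aux_union F Z W' hW'sub' with h1 | h2
    · have hle : Module.rank ℝ W' ≤ Module.rank ℝ F := Submodule.rank_mono h1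
      rw [hW'rank, hFrank] at hle
      exact absurd hle (not_le.mpr (Cardinal.nat_lt_continuum n))
    · have h0F : (Pi.single (0:ℕ) (1:ℝ) : ℕ → ℝ) ∈ F := by
        apply Submodule.subset_span
        exact ⟨⟨0, hn⟩, rfl⟩
      have h0Z : (Pi.single (0:ℕ) (1:ℝ) : ℕ → ℝ) ∈ Zmod p hp n := h2 (hFW' h0F)
      have hz := (mem_Zmod.mp h0Z).2 0 hn
      simp at hz
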